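/- (Proposition 2(i)) Suppose K_∞ = ∞ and L_∞ < ∞. Then D = ∞ and, for every l ≥ 0, lim_{n→∞} Q_n^{(l)}(0) = 1 + μ_l π_l (L_∞ − L_{l−1}) < ∞. -/

import Mathlib

/-!
At `x = 0` the recurrence for the associated polynomials becomes
`λ_{n+l} (Q_{n+1} - Q_n) = μ_{n+l} (Q_n - Q_{n-1})` with `λ_l (Q_1 - Q_0) = μ_l`, and
`(λ_{m+1} π_{m+1})⁻¹ = (μ_{m+1} / λ_{m+1}) (λ_m π_m)⁻¹` shows that the increments are
`Q_{n+1}^{(l)}(0) - Q_n^{(l)}(0) = μ_l π_l (λ_{n+l} π_{n+l})⁻¹`. Hence `Q_n^{(l)}(0)` is `1` plus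
`μ_l π_l` times a partial sum of the tail of the convergent series `L_∞`, and the limit follows.
The claim `D = ∞` already comes from the term `n = 0`, where `K_∞ - K_0 = ∞`.
-/

open Filter Topology ENNReal MeasureTheory Finset

theorem ENNReal.tsum_mul_top_sub_eq_top {ι : Type*} {a b : ι → ℝ≥0∞} (i : ι) (ha : a i ≠ 0)
    (hb : b i ≠ ⊤) : ∑' n, a n * (⊤ - b n) = ⊤ := by
  refine top_le_iff.1 (le_trans (le_of_eq ?_) (ENNReal.le_tsum i))
  rw [ENNReal.top_sub hb, ENNReal.mul_top ha]

theorem summable_of_tsum_ofReal_ne_top {ι : Type*} {f : ι → ℝ} (hf : ∀ i, 0 ≤ f i)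
    (h : ∑' i, ENNReal.ofReal (f i) ≠ ⊤) : Summable f :=
  (ENNReal.summable_toReal h).congr fun i => ENNReal.toReal_ofReal (hf i)

namespace BirthDeath

variable {lam mu pi : ℕ → ℝ}

theorem pi_pos (hlam : ∀ n, 0 < lam n) (hmu : ∀ n, 1 ≤ n → 0 < mu n) (hpi0 : pi 0 = 1)
    (hpi : ∀ n, pi (n + 1) = pi n * lam n / mu (n + 1)) (n : ℕ) : 0 < pi n := by
  induction n with
  | zero => simp [hpi0]
  | succ n ih =>
    rw [hpi n]
    exact div_pos (mul_pos ih (hlam n)) (hmu (n + 1) n.succ_pos)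

theorem inv_lam_mul_pi_succ (hpi : ∀ n, pi (n + 1) = pi n * lam n / mu (n + 1)) (m : ℕ) :
    (lam (m + 1) * pi (m + 1))⁻¹ = mu (m + 1) / lam (m + 1) * (lam m * pi m)⁻¹ := by
  rw [hpi m, div_eq_mul_inv, div_eq_mul_inv]
  simp only [mul_inv, inv_inv]
  ring

section AssociatedPolynomials

variable {Q : ℕ → ℕ → ℝ → ℝ} (hQ0 : ∀ l x, Q l 0 x = 1)
  (hQ1 : ∀ l x, lam l * Q l 1 x = lam l + mu l - x)
  (hQrec : ∀ l n x, lam (n + 1 + l) * Q l (n + 2) x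
    = (lam (n + 1 + l) + mu (n + 1 + l) - x) * Q l (n + 1) x - mu (n + 1 + l) * Q l n x)
include hQ0 hQ1 hQrec

theorem assocPoly_succ_sub_zero (hlam : ∀ n, lam n ≠ 0) (hpi_ne : ∀ n, pi n ≠ 0)
    (hpi : ∀ n, pi (n + 1) = pi n * lam n / mu (n + 1)) (l n : ℕ) :
    Q l (n + 1) 0 - Q l n 0 = mu l * pi l * (lam (n + l) * pi (n + l))⁻¹ := by
  induction n with
  | zero =>
    have h1 := hQ1 l 0
    rw [hQ0]
    simp only [Nat.zero_add]
    field_simp [hlam l, hpi_ne l]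
    linear_combination h1
  | succ n ih =>
    have hl := hlam (n + 1 + l)
    have hstep : Q l (n + 2) 0 - Q l (n + 1) 0
        = mu (n + 1 + l) / lam (n + 1 + l) * (Q l (n + 1) 0 - Q l n 0) := by
      field_simp
      linear_combination hQrec l n 0
    rw [hstep, ih, show n + 1 + l = n + l + 1 by omega, inv_lam_mul_pi_succ hpi]
    ring

theorem assocPoly_zero_eq (hlam : ∀ n, lam n ≠ 0) (hpi_ne : ∀ n, pi n ≠ 0)
    (hpi : ∀ n, pi (n + 1) = pi n * lam n / mu (n + 1)) (l n : ℕ) :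
    Q l n 0 = 1 + mu l * pi l * ∑ k ∈ range n, (lam (k + l) * pi (k + l))⁻¹ := by
  rw [mul_sum, ← hQ0 l 0, ← sub_eq_iff_eq_add', ← sum_range_sub (fun k => Q l k 0)]
  exact sum_congr rfl fun k _ => assocPoly_succ_sub_zero hQ0 hQ1 hQrec hlam hpi_ne hpi l k

end AssociatedPolynomials

end BirthDeath

open BirthDeath in
theorem stmt6_general
    (lam mu : ℕ → ℝ) (pi : ℕ → ℝ)
    (hlam : ∀ n, 0 < lam n) (hmu : ∀ n, 1 ≤ n → 0 < mu n)
    (hpi0 : pi 0 = 1) (hpi : ∀ n, pi (n + 1) = pi n * lam n / mu (n + 1))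
    (K : ℕ → ℝ≥0∞) (hK : ∀ n, K n = ∑ i ∈ Finset.range (n + 1), ENNReal.ofReal (pi i))
    (Kinf Linf D : ℝ≥0∞)
    (hLinf : Linf = ∑' i, ENNReal.ofReal (1 / (lam i * pi i)))
    (hD : D = ∑' n, ENNReal.ofReal (1 / (lam n * pi n)) * (Kinf - K n))
    (Q : ℕ → ℕ → ℝ → ℝ)
    (hQ0 : ∀ l x, Q l 0 x = 1)
    (hQ1 : ∀ l x, lam l * Q l 1 x = lam l + mu l - x)
    (hQrec : ∀ l n x, lam (n + 1 + l) * Q l (n + 2) x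
      = (lam (n + 1 + l) + mu (n + 1 + l) - x) * Q l (n + 1) x - mu (n + 1 + l) * Q l n x)
    (Lp : ℕ → ℝ) (hLp : ∀ m, Lp m = ∑ i ∈ Finset.range m, (lam i * pi i)⁻¹)
    (hKtop : Kinf = ⊤) (hLfin : Linf ≠ ⊤) :
    D = ⊤ ∧
      ∀ l, Tendsto (fun n => Q l n 0) atTop
        (nhds (1 + mu l * pi l * ((∑' i, (lam i * pi i)⁻¹) - Lp l))) := by
  have hpi_pos := pi_pos hlam hmu hpi0 hpi
  have hlampi (n : ℕ) : 0 < lam n * pi n := mul_pos (hlam n) (hpi_pos n)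
  refine ⟨?_, fun l => ?_⟩
  · rw [hD, hKtop]
    refine ENNReal.tsum_mul_top_sub_eq_top 0 ?_ ?_
    · exact (ENNReal.ofReal_pos.2 (one_div_pos.2 (hlampi 0))).ne'
    · rw [hK]
      exact ENNReal.sum_ne_top.2 fun i _ => ENNReal.ofReal_ne_top
  · have hsum : Summable fun i => (lam i * pi i)⁻¹ :=
      summable_of_tsum_ofReal_ne_top (fun i => (inv_pos.2 (hlampi i)).le)
        (by simpa only [hLinf, one_div] using hLfin)
    have htail := ((hasSum_nat_add_iff' l).2 hsum.hasSum).tendsto_sum_nat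
    rw [hLp]
    simpa only [assocPoly_zero_eq hQ0 hQ1 hQrec (fun n => (hlam n).ne')
      (fun n => (hpi_pos n).ne') hpi] using (htail.const_mul (mu l * pi l)).const_add 1

theorem stmt6
    (lam mu : ℕ → ℝ) (pi : ℕ → ℝ)
    (hlam : ∀ n, 0 < lam n) (hmu0 : 0 ≤ mu 0) (hmu : ∀ n, 1 ≤ n → 0 < mu n)
    (hpi0 : pi 0 = 1) (hpi : ∀ n, pi (n + 1) = pi n * lam n / mu (n + 1))
    (K : ℕ → ℝ≥0∞) (hK : ∀ n, K n = ∑ i ∈ Finset.range (n + 1), ENNReal.ofReal (pi i))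
    (Kinf Linf C D : ℝ≥0∞)
    (hKinf : Kinf = ∑' i, ENNReal.ofReal (pi i))
    (hLinf : Linf = ∑' i, ENNReal.ofReal (1 / (lam i * pi i)))
    (hC : C = ∑' n, ENNReal.ofReal (1 / (lam n * pi n)) * K n)
    (hD : D = ∑' n, ENNReal.ofReal (1 / (lam n * pi n)) * (Kinf - K n))
    (Q : ℕ → ℕ → ℝ → ℝ)
    (hQ0 : ∀ l x, Q l 0 x = 1)
    (hQ1 : ∀ l x, lam l * Q l 1 x = lam l + mu l - x)
    (hQrec : ∀ l n x, lam (n + 1 + l) * Q l (n + 2) x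
      = (lam (n + 1 + l) + mu (n + 1 + l) - x) * Q l (n + 1) x - mu (n + 1 + l) * Q l n x)
    (Lp : ℕ → ℝ) (hLp : ∀ m, Lp m = ∑ i ∈ Finset.range m, (lam i * pi i)⁻¹)
    (hKtop : Kinf = ⊤) (hLfin : Linf ≠ ⊤) :
    D = ⊤ ∧
      ∀ l, Tendsto (fun n => Q l n 0) atTop
        (nhds (1 + mu l * pi l * ((∑' i, (lam i * pi i)⁻¹) - Lp l))) :=
  stmt6_general lam mu pi hlam hmu hpi0 hpi K hK Kinf Linf D hLinf hD Q hQ0 hQ1 hQrec Lp hLp hKtop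
    hLfin
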